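/- Let D be a nonempty compact convex subset of ℝ^{d×m}, let F : ℝ^{d×m} → ℝ be convex and differentiable, and let C_F ≥ 0 be a curvature bound for F on D. Define the Frank–Wolfe iterates by choosing W⁰ ∈ D and, for t = 0, 1, 2, …, setting W^{t+1} = (1 − γ^t) W^t + γ^t S^t, where γ^t = 2/(t+2) and S^t ∈ argmin_{S ∈ D} ⟨S, ∇F(W^t)⟩. Then for every t ≥ 1, F(W^t) − F(W*) ≤ 2 C_F / (t+2), where W* is any minimizer of F over D. -/

import Mathlib

open Matrix MeasureTheory ProbabilityTheory

attribute [local instance] Matrix.frobeniusNormedAddCommGroup Matrix.frobeniusNormedSpace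

noncomputable section

/-- The Frobenius inner product `⟨A, B⟩ = trace (Aᵀ * B)` on `ℝ^{d×m}`. -/
def frobInner {d m : ℕ} (A B : Matrix (Fin d) (Fin m) ℝ) : ℝ := (Aᵀ * B).trace

/-- The Frobenius norm `‖A‖_F = √⟨A, A⟩`. -/
def frobNorm {d m : ℕ} (A : Matrix (Fin d) (Fin m) ℝ) : ℝ := Real.sqrt (frobInner A A)

/-- `C` is a curvature bound for a differentiable `F` (with gradient `gradF`) on a convex set
`D` if `F(W + γ(S − W)) ≤ F(W) + γ⟨S − W, ∇F(W)⟩ + (γ²/2) C` for all `W, S ∈ D`, `γ ∈ [0,1]`. -/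
def IsCurvatureBound {d m : ℕ} (F : Matrix (Fin d) (Fin m) ℝ → ℝ)
    (gradF : Matrix (Fin d) (Fin m) ℝ → Matrix (Fin d) (Fin m) ℝ)
    (D : Set (Matrix (Fin d) (Fin m) ℝ)) (C : ℝ) : Prop :=
  ∀ W ∈ D, ∀ S ∈ D, ∀ γ : ℝ, γ ∈ Set.Icc (0 : ℝ) 1 →
    F (W + γ • (S - W)) ≤ F W + γ * frobInner (S - W) (gradF W) + γ ^ 2 / 2 * C

/-- The singular values of a rectangular real matrix `A`: square roots of the
eigenvalues of `Aᵀ A` (listed with multiplicity, indexed by `Fin m`). -/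
def singularValues {d m : ℕ} (A : Matrix (Fin d) (Fin m) ℝ) : Fin m → ℝ := fun i =>
  Real.sqrt ((show (Aᵀ * A).IsHermitian by
    rw [← Matrix.conjTranspose_eq_transpose_of_trivial]
    exact Matrix.isHermitian_conjTranspose_mul_self A).eigenvalues i)

/-- The trace norm (nuclear norm): the sum of the singular values. -/
def traceNorm {d m : ℕ} (A : Matrix (Fin d) (Fin m) ℝ) : ℝ := ∑ i, singularValues A i

/-- The largest singular value, `σ₁(A) = sup { uᵀ A v : ‖u‖₂ = ‖v‖₂ = 1 }`. -/
def sigma1 {d m : ℕ} (A : Matrix (Fin d) (Fin m) ℝ) : ℝ :=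
  sSup {r : ℝ | ∃ (u : Fin d → ℝ) (v : Fin m → ℝ),
    ∑ i, u i ^ 2 = 1 ∧ ∑ j, v j ^ 2 = 1 ∧ r = ∑ i, ∑ j, u i * A i j * v j}

/-- The second-largest singular value (when `σ₁` has multiplicity 1): the largest
singular value strictly below `σ₁`. -/
def sigma2 {d m : ℕ} (A : Matrix (Fin d) (Fin m) ℝ) : ℝ :=
  sSup {r : ℝ | (∃ i, singularValues A i = r) ∧ r < sigma1 A}

/-- The Euclidean norm on `ℝ^k`. -/
def enorm2 {k : ℕ} (v : Fin k → ℝ) : ℝ := Real.sqrt (∑ i, v i ^ 2)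

/-- Normalization of a vector in the Euclidean norm. -/
def normalize' {k : ℕ} (v : Fin k → ℝ) : Fin k → ℝ := (enorm2 v)⁻¹ • v

/-- Power method iterates: `b₀ = b`, `b_{k+1} = A b_k / ‖A b_k‖₂`. -/
def powerIter {k : ℕ} (A : Matrix (Fin k) (Fin k) ℝ) (b : Fin k → ℝ) : ℕ → Fin k → ℝ
  | 0 => b
  | n + 1 => normalize' (A.mulVec (powerIter A b n))

/-- Rayleigh quotient `vᵀ A v`. -/
def rayleigh {k : ℕ} (A : Matrix (Fin k) (Fin k) ℝ) (v : Fin k → ℝ) : ℝ :=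
  ∑ i, v i * A.mulVec v i

/-- Alternating power iterations producing `v_k`:
`u_{k+1} = A v_k / ‖A v_k‖₂`, `v_{k+1} = Aᵀ u_{k+1} / ‖Aᵀ u_{k+1}‖₂`. -/
def altIter {d m : ℕ} (A : Matrix (Fin d) (Fin m) ℝ) (v0 : Fin m → ℝ) : ℕ → Fin m → ℝ
  | 0 => v0
  | k + 1 => normalize' (Aᵀ.mulVec (normalize' (A.mulVec (altIter A v0 k))))

instance matrixMeasurableSpace {d m : ℕ} : MeasurableSpace (Matrix (Fin d) (Fin m) ℝ) :=
  inferInstanceAs (MeasurableSpace (Fin d → Fin m → ℝ))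

/-! Since `S` minimizes the linear model `⟨·, ∇F(W)⟩` over `D`, convexity of `F` gives
`⟨S - W, ∇F(W)⟩ ≤ F(V) - F(W)` for every `V ∈ D`. Inserted into the curvature bound, this shows
that `hₜ = F(Wᵗ) - F(V)` obeys `hₜ₊₁ ≤ (1 - γₜ) hₜ + γₜ² C_F / 2`, and for `γₜ = 2/(t+2)` this
recursion yields `hₜ ≤ 2 C_F/(t+2)` by induction, the start being free since `γ₀ = 1`. -/

theorem ConvexOn.add_fderiv_sub_le {E : Type*} [NormedAddCommGroup E] [NormedSpace ℝ E]
    {s : Set E} {f : E → ℝ} (hf : ConvexOn ℝ s f) {x y : E} (hx : x ∈ s) (hy : y ∈ s)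
    (hdiff : DifferentiableAt ℝ f x) :
    f x + fderiv ℝ f x (y - x) ≤ f y := by
  let g : ℝ →ᵃ[ℝ] E := AffineMap.lineMap x y
  have hderiv : HasDerivAt (f ∘ g) (fderiv ℝ f x (y - x)) 0 := by
    have hf' : HasFDerivAt f (fderiv ℝ f x) (g 0) := by
      simpa [g] using hdiff.hasFDerivAt
    exact hf'.comp_hasDerivAt 0 AffineMap.hasDerivAt_lineMap
  have hslope := (hf.comp_affineMap g).le_slope_of_hasDerivAt (by simpa [g] using hx)
    (by simpa [g] using hy) zero_lt_one hderiv
  rw [slope_def_field] at hslope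
  simp only [Function.comp_apply, g, AffineMap.lineMap_apply_zero, AffineMap.lineMap_apply_one,
    sub_zero, div_one] at hslope
  linarith

section FrankWolfe

variable {d m : ℕ}

lemma frobInner_comm (A B : Matrix (Fin d) (Fin m) ℝ) : frobInner A B = frobInner B A := by
  rw [frobInner, frobInner, ← Matrix.trace_transpose (Aᵀ * B), Matrix.transpose_mul,
    Matrix.transpose_transpose]

lemma frobInner_sub_left (A B C : Matrix (Fin d) (Fin m) ℝ) :
    frobInner (A - B) C = frobInner A C - frobInner B C := by
  simp only [frobInner, Matrix.transpose_sub, Matrix.sub_mul, Matrix.trace_sub]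

variable {D : Set (Matrix (Fin d) (Fin m) ℝ)} {F : Matrix (Fin d) (Fin m) ℝ → ℝ}
  {gradF : Matrix (Fin d) (Fin m) ℝ → Matrix (Fin d) (Fin m) ℝ} {W S V : Matrix (Fin d) (Fin m) ℝ}

lemma frobInner_sub_grad_le_sub_of_isMinOn (hF : ConvexOn ℝ D F) (hW : W ∈ D) (hV : V ∈ D)
    (hdiff : DifferentiableAt ℝ F W) (hgrad : ∀ Δ, fderiv ℝ F W Δ = frobInner (gradF W) Δ)
    (hS : IsMinOn (fun A => frobInner A (gradF W)) D S) :
    frobInner (S - W) (gradF W) ≤ F V - F W := by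
  have hfirst : F W + frobInner (gradF W) (V - W) ≤ F V := by
    rw [← hgrad]
    exact hF.add_fderiv_sub_le hW hV hdiff
  rw [frobInner_comm, frobInner_sub_left] at hfirst
  rw [frobInner_sub_left]
  linarith [isMinOn_iff.1 hS V hV]

lemma IsCurvatureBound.frankWolfe_step_sub_le {C : ℝ} (hcurv : IsCurvatureBound F gradF D C)
    (hF : ConvexOn ℝ D F) (hW : W ∈ D) (hS : S ∈ D) (hV : V ∈ D)
    (hdiff : DifferentiableAt ℝ F W) (hgrad : ∀ Δ, fderiv ℝ F W Δ = frobInner (gradF W) Δ)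
    (hSmin : IsMinOn (fun A => frobInner A (gradF W)) D S) {γ : ℝ} (hγ : γ ∈ Set.Icc (0 : ℝ) 1) :
    F (W + γ • (S - W)) - F V ≤ (1 - γ) * (F W - F V) + γ ^ 2 / 2 * C := by
  have hgap := frobInner_sub_grad_le_sub_of_isMinOn hF hW hV hdiff hgrad hSmin
  linarith [hcurv W hW S hS γ hγ, mul_le_mul_of_nonneg_left hgap hγ.1]

end FrankWolfe

lemma two_div_natCast_add_two_mem_Icc (t : ℕ) : 2 / ((t : ℝ) + 2) ∈ Set.Icc (0 : ℝ) 1 :=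
  ⟨by positivity, (div_le_one (by positivity)).2 (by linarith [(t.cast_nonneg : (0 : ℝ) ≤ t)])⟩

lemma le_two_mul_div_add_two_of_recurrence {h : ℕ → ℝ} {C : ℝ} (hC : 0 ≤ C)
    (hrec : ∀ t : ℕ, h (t + 1) ≤
      (1 - 2 / ((t : ℝ) + 2)) * h t + (2 / ((t : ℝ) + 2)) ^ 2 / 2 * C) :
    ∀ t : ℕ, 1 ≤ t → h t ≤ 2 * C / ((t : ℝ) + 2) := by
  intro t ht
  induction t, ht using Nat.le_induction with
  | base => linarith [hrec 0, show (1 - 2 / ((0 : ℕ) + 2 : ℝ)) = 0 by norm_num]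
  | succ t _ ih =>
    have hγ := two_div_natCast_add_two_mem_Icc t
    calc h (t + 1)
        ≤ (1 - 2 / ((t : ℝ) + 2)) * (2 * C / ((t : ℝ) + 2)) + (2 / ((t : ℝ) + 2)) ^ 2 / 2 * C :=
          (hrec t).trans (by gcongr; linarith [hγ.2])
      _ = 2 * C * (t + 1) / (t + 2) ^ 2 := by field_simp; ring
      _ ≤ 2 * C / ((t + 1 : ℕ) + 2) := by
          rw [div_le_div_iff₀ (by positivity) (by positivity)]
          push_cast
          -- `(t + 1) (t + 3) ≤ (t + 2)²`
          nlinarith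

theorem frank_wolfe_sublinear_convergence_general {d m : ℕ}
    (D : Set (Matrix (Fin d) (Fin m) ℝ))
    (hDcv : Convex ℝ D)
    (F : Matrix (Fin d) (Fin m) ℝ → ℝ)
    (gradF : Matrix (Fin d) (Fin m) ℝ → Matrix (Fin d) (Fin m) ℝ)
    (hFconv : ConvexOn ℝ Set.univ F)
    (hFdiff : Differentiable ℝ F)
    (hgrad : ∀ W Δ, fderiv ℝ F W Δ = frobInner (gradF W) Δ)
    (C_F : ℝ) (hC : 0 ≤ C_F) (hcurv : IsCurvatureBound F gradF D C_F)
    (W S : ℕ → Matrix (Fin d) (Fin m) ℝ)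
    (hW0 : W 0 ∈ D)
    (hSmem : ∀ t, S t ∈ D)
    (hSopt : ∀ t, ∀ S' ∈ D, frobInner (S t) (gradF (W t)) ≤ frobInner S' (gradF (W t)))
    (hrec : ∀ t : ℕ, W (t + 1) =
      (1 - 2 / ((t : ℝ) + 2)) • W t + (2 / ((t : ℝ) + 2)) • S t)
    (Wstar : Matrix (Fin d) (Fin m) ℝ) (hWstarD : Wstar ∈ D) :
    ∀ t : ℕ, 1 ≤ t → F (W t) - F Wstar ≤ 2 * C_F / ((t : ℝ) + 2) := by
  have hFD : ConvexOn ℝ D F := hFconv.subset (Set.subset_univ D) hDcv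
  have hW_succ (t : ℕ) : W (t + 1) = W t + (2 / ((t : ℝ) + 2)) • (S t - W t) := by
    rw [hrec t]; module
  have hWD : ∀ t, W t ∈ D := by
    intro t
    induction t with
    | zero => exact hW0
    | succ t ih =>
      rw [hW_succ t]
      exact hDcv.add_smul_sub_mem ih (hSmem t) (two_div_natCast_add_two_mem_Icc t)
  refine le_two_mul_div_add_two_of_recurrence hC fun t => ?_
  rw [hW_succ t]
  exact hcurv.frankWolfe_step_sub_le hFD (hWD t) (hSmem t) hWstarD (hFdiff _) (hgrad _)
    (isMinOn_iff.2 (hSopt t)) (two_div_natCast_add_two_mem_Icc t)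

/-- Sublinear convergence of the (deterministic) Frank–Wolfe algorithm
with step size `γ^t = 2/(t+2)` and exact linear minimization oracle. -/
theorem frank_wolfe_sublinear_convergence {d m : ℕ}
    (D : Set (Matrix (Fin d) (Fin m) ℝ))
    (hDne : D.Nonempty) (hDcp : IsCompact D) (hDcv : Convex ℝ D)
    (F : Matrix (Fin d) (Fin m) ℝ → ℝ)
    (gradF : Matrix (Fin d) (Fin m) ℝ → Matrix (Fin d) (Fin m) ℝ)
    (hFconv : ConvexOn ℝ Set.univ F)
    (hFdiff : Differentiable ℝ F)
    (hgrad : ∀ W Δ, fderiv ℝ F W Δ = frobInner (gradF W) Δ)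
    (C_F : ℝ) (hC : 0 ≤ C_F) (hcurv : IsCurvatureBound F gradF D C_F)
    (W S : ℕ → Matrix (Fin d) (Fin m) ℝ)
    (hW0 : W 0 ∈ D)
    (hSmem : ∀ t, S t ∈ D)
    (hSopt : ∀ t, ∀ S' ∈ D, frobInner (S t) (gradF (W t)) ≤ frobInner S' (gradF (W t)))
    (hrec : ∀ t : ℕ, W (t + 1) =
      (1 - 2 / ((t : ℝ) + 2)) • W t + (2 / ((t : ℝ) + 2)) • S t)
    (Wstar : Matrix (Fin d) (Fin m) ℝ) (hWstarD : Wstar ∈ D)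
    (hWstarmin : ∀ V ∈ D, F Wstar ≤ F V) :
    ∀ t : ℕ, 1 ≤ t → F (W t) - F Wstar ≤ 2 * C_F / ((t : ℝ) + 2) :=
  frank_wolfe_sublinear_convergence_general D hDcv F gradF hFconv hFdiff hgrad C_F hC hcurv W S hW0
    hSmem hSopt hrec Wstar hWstarD
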